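/- arXiv:1201.3688 — 4 statements merged into one kernel-verified Lean document; each statement's English description precedes it below -/
import Mathlib

section
/- At τ = i, the Jacobi theta functions satisfy θ₃(1) = 2^{1/4} · θ₄(1); that is, ∑_{n ∈ ℤ} e^{-π n²} = 2^{1/4} · ∑_{n ∈ ℤ} (-1)^n e^{-π n²}. -/
/-!
Rotating the lattice `ℤ²` by 45°, i.e. writing `(m, n) = (p + q, p - q)` or `(p + q + 1, p - q)`
according to the parity of `m + n`, turns products of theta values at `y` into sums of squares of
theta values at `2y`: `θ₃(1)² = θ₃(2)² + θ₂(2)²`, `θ₄(1)² = θ₃(2)² - θ₂(2)²`, and `θ₃(1) θ₄(1)` is a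
sum of two squares, so `θ₄(1) ≥ 0`. Splitting `θ₃(1/2)` into even and odd terms gives
`θ₃(2) + θ₂(2)`, while Poisson summation gives `θ₃(1/2) = √2 θ₃(2)`; hence
`θ₂(2) = (√2 - 1) θ₃(2)`, and substituting yields `θ₃(1)² = √2 θ₄(1)²`.
-/

open Real

def Int.evenOddEquiv : ℤ ⊕ ℤ ≃ ℤ where
  toFun := Sum.elim (fun k => 2 * k) (fun k => 2 * k + 1)
  invFun n := if n % 2 = 0 then .inl (n / 2) else .inr (n / 2)
  left_inv := by rintro (k | k) <;> grind
  right_inv n := by grind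

def Int.parityRotationEquiv : (ℤ × ℤ) ⊕ (ℤ × ℤ) ≃ ℤ × ℤ where
  toFun := Sum.elim (fun x => (x.1 + x.2, x.1 - x.2)) (fun x => (x.1 + x.2 + 1, x.1 - x.2))
  invFun x := if (x.1 + x.2) % 2 = 0 then .inl ((x.1 + x.2) / 2, (x.1 - x.2) / 2)
    else .inr ((x.1 + x.2 - 1) / 2, (x.1 - x.2 - 1) / 2)
  left_inv := by rintro (⟨p, q⟩ | ⟨p, q⟩) <;> grind
  right_inv := by rintro ⟨m, n⟩; grind

theorem tsum_int_eq_tsum_even_add_tsum_odd {M : Type*} [AddCommMonoid M] [TopologicalSpace M]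
    [ContinuousAdd M] [T2Space M] {f : ℤ → M} (he : Summable fun k => f (2 * k))
    (ho : Summable fun k => f (2 * k + 1)) :
    ∑' n, f n = ∑' k, f (2 * k) + ∑' k, f (2 * k + 1) := by
  rw [← Int.evenOddEquiv.tsum_eq]
  exact Summable.tsum_sum (f := fun c => f (Int.evenOddEquiv c)) he ho

theorem tsum_mul_tsum_eq_tsum_parityRotation {R : Type*} [NormedRing R] [CompleteSpace R]
    {f g : ℤ → R} (hf : Summable fun n => ‖f n‖) (hg : Summable fun n => ‖g n‖) :
    (∑' m, f m) * ∑' n, g n =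
      ∑' x : ℤ × ℤ, f (x.1 + x.2) * g (x.1 - x.2) +
        ∑' x : ℤ × ℤ, f (x.1 + x.2 + 1) * g (x.1 - x.2) := by
  have hfg :=
    (summable_mul_of_summable_norm hf hg).comp_injective Int.parityRotationEquiv.injective
  rw [tsum_mul_tsum_of_summable_norm hf hg, ← Int.parityRotationEquiv.tsum_eq]
  exact Summable.tsum_sum
    (f := fun c => f (Int.parityRotationEquiv c).1 * g (Int.parityRotationEquiv c).2)
    (hfg.comp_injective Sum.inl_injective) (hfg.comp_injective Sum.inr_injective)

theorem zpow_sub_of_abs_eq_one {ε : ℝ} (hε : |ε| = 1) (m n : ℤ) :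
    ε ^ (m - n) = ε ^ m * ε ^ n := by
  have hε0 : ε ≠ 0 := by rintro rfl; simp at hε
  have hinv : ε⁻¹ = ε := inv_eq_of_mul_eq_one_right (by rw [← abs_mul_abs_self, hε, one_mul])
  rw [sub_eq_add_neg, zpow_add₀ hε0, zpow_neg, ← inv_zpow, hinv]

theorem exp_add_sq_mul_exp_sub_sq (y a b : ℝ) :
    exp (-π * y * (a + b) ^ 2) * exp (-π * y * (a - b) ^ 2) =
      exp (-π * (2 * y) * a ^ 2) * exp (-π * (2 * y) * b ^ 2) := by
  rw [← exp_add, ← exp_add]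
  ring_nf

noncomputable def thetaTerm (ε s y : ℝ) (n : ℤ) : ℝ := ε ^ n * exp (-π * y * (n + s) ^ 2)

/-- A theta function with characteristics on the imaginary axis, for `ε = ±1`:
`θ₃(y) = thetaChar 1 0 y`, `θ₄(y) = thetaChar (-1) 0 y` and `θ₂(y) = thetaChar 1 (1 / 2) y`. -/
noncomputable def thetaChar (ε s y : ℝ) : ℝ := ∑' n : ℤ, thetaTerm ε s y n

theorem summable_exp_neg_mul_add_sq (s : ℝ) {y : ℝ} (hy : 0 < y) :
    Summable fun n : ℤ => exp (-π * y * (n + s) ^ 2) := by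
  have hθ := ((summable_jacobiTheta₂_term_iff ((s * y : ℝ) * Complex.I) (y * Complex.I)).mpr
    (by simpa using hy)).norm.mul_left (exp (-π * y * s ^ 2))
  refine hθ.congr fun n => ?_
  rw [norm_jacobiTheta₂_term, ← exp_add]
  simp only [Complex.mul_im, Complex.ofReal_re, Complex.ofReal_im, Complex.I_re, Complex.I_im]
  ring_nf

theorem summable_norm_thetaTerm {ε : ℝ} (hε : |ε| = 1) (s : ℝ) {y : ℝ} (hy : 0 < y) :
    Summable fun n => ‖thetaTerm ε s y n‖ := by
  simpa only [thetaTerm, norm_mul, norm_zpow, Real.norm_eq_abs, hε, one_zpow, one_mul, abs_exp]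
    using summable_exp_neg_mul_add_sq s hy

theorem thetaTerm_mul_thetaTerm_even {ε ε' : ℝ} (hε : |ε| = 1) (hε' : |ε'| = 1) (y : ℝ)
    (p q : ℤ) :
    thetaTerm ε 0 y (p + q) * thetaTerm ε' 0 y (p - q) =
      thetaTerm (ε * ε') 0 (2 * y) p * thetaTerm (ε * ε') 0 (2 * y) q := by
  have hε0 : ε ≠ 0 := by rintro rfl; simp at hε
  have hexp := exp_add_sq_mul_exp_sub_sq y p q
  simp only [thetaTerm, zpow_add₀ hε0, zpow_sub_of_abs_eq_one hε', mul_zpow, Int.cast_add,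
    Int.cast_sub, add_zero]
  linear_combination ε ^ p * ε ^ q * ε' ^ p * ε' ^ q * hexp

theorem thetaTerm_mul_thetaTerm_odd {ε ε' : ℝ} (hε : |ε| = 1) (hε' : |ε'| = 1) (y : ℝ)
    (p q : ℤ) :
    thetaTerm ε 0 y (p + q + 1) * thetaTerm ε' 0 y (p - q) =
      ε * (thetaTerm (ε * ε') (1 / 2) (2 * y) p * thetaTerm (ε * ε') (1 / 2) (2 * y) q) := by
  have hε0 : ε ≠ 0 := by rintro rfl; simp at hε
  have hexp := exp_add_sq_mul_exp_sub_sq y (p + 1 / 2) (q + 1 / 2)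
  rw [add_add_add_comm, add_halves, add_sub_add_right_eq_sub] at hexp
  simp only [thetaTerm, zpow_add₀ hε0, zpow_one, zpow_sub_of_abs_eq_one hε', mul_zpow,
    Int.cast_add, Int.cast_sub, Int.cast_one, add_zero]
  linear_combination ε * ε ^ p * ε ^ q * ε' ^ p * ε' ^ q * hexp

theorem thetaChar_mul_thetaChar {ε ε' : ℝ} (hε : |ε| = 1) (hε' : |ε'| = 1) {y : ℝ}
    (hy : 0 < y) :
    thetaChar ε 0 y * thetaChar ε' 0 y =
      thetaChar (ε * ε') 0 (2 * y) ^ 2 + ε * thetaChar (ε * ε') (1 / 2) (2 * y) ^ 2 := by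
  have hεε' : |ε * ε'| = 1 := by rw [abs_mul, hε, hε', one_mul]
  have h2y : 0 < 2 * y := by positivity
  rw [thetaChar, thetaChar, tsum_mul_tsum_eq_tsum_parityRotation
    (summable_norm_thetaTerm hε 0 hy) (summable_norm_thetaTerm hε' 0 hy), sq, sq, thetaChar,
    thetaChar, tsum_mul_tsum_of_summable_norm (summable_norm_thetaTerm hεε' 0 h2y)
      (summable_norm_thetaTerm hεε' 0 h2y),
    tsum_mul_tsum_of_summable_norm (summable_norm_thetaTerm hεε' _ h2y)
      (summable_norm_thetaTerm hεε' _ h2y), ← tsum_mul_left]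
  simp only [thetaTerm_mul_thetaTerm_even hε hε', thetaTerm_mul_thetaTerm_odd hε hε']

theorem thetaChar_one_pos (s : ℝ) {y : ℝ} (hy : 0 < y) : 0 < thetaChar 1 s y :=
  (summable_norm_thetaTerm abs_one s hy).of_norm.tsum_pos
    (fun n => by simp only [thetaTerm, one_zpow, one_mul]; positivity) 0
    (by simp only [thetaTerm, one_zpow, one_mul]; positivity)

theorem thetaChar_neg_one_nonneg {y : ℝ} (hy : 0 < y) : 0 ≤ thetaChar (-1) 0 y := by
  have h := thetaChar_mul_thetaChar (ε' := -1) abs_one (by norm_num) hy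
  exact nonneg_of_mul_nonneg_right (h ▸ by positivity) (thetaChar_one_pos 0 hy)

theorem thetaChar_one_eq_add {y : ℝ} (hy : 0 < y) :
    thetaChar 1 0 y = thetaChar 1 0 (4 * y) + thetaChar 1 (1 / 2) (4 * y) := by
  have hsum := (summable_norm_thetaTerm abs_one 0 hy).of_norm
  rw [thetaChar, tsum_int_eq_tsum_even_add_tsum_odd
    (hsum.comp_injective (mul_right_injective₀ two_ne_zero))
    (hsum.comp_injective ((add_left_injective 1).comp (mul_right_injective₀ two_ne_zero)))]
  congr 1 <;> refine tsum_congr fun k => ?_ <;> simp only [thetaTerm, one_zpow, one_mul] <;>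
    push_cast <;> ring_nf

theorem thetaChar_one_inv {y : ℝ} (hy : 0 < y) :
    thetaChar 1 0 y⁻¹ = √y * thetaChar 1 0 y := by
  have h := Real.tsum_exp_neg_mul_int_sq (inv_pos.mpr hy)
  simp only [thetaChar, thetaTerm, one_zpow, one_mul, add_zero]
  rw [h, inv_rpow hy.le, one_div, inv_inv, ← sqrt_eq_rpow, div_inv_eq_mul]

theorem thetaChar_one_half_two : thetaChar 1 (1 / 2) 2 = (√2 - 1) * thetaChar 1 0 2 := by
  have hsplit := thetaChar_one_eq_add (inv_pos.mpr two_pos)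
  rw [thetaChar_one_inv two_pos] at hsplit
  norm_num at hsplit
  linarith

theorem thetaChar_one_sq_eq_sqrt_two_mul_sq :
    thetaChar 1 0 1 ^ 2 = √2 * thetaChar (-1) 0 1 ^ 2 := by
  have h33 := thetaChar_mul_thetaChar abs_one abs_one one_pos
  have h44 := thetaChar_mul_thetaChar (ε := -1) (ε' := -1) (by norm_num) (by norm_num) one_pos
  norm_num at h33 h44
  rw [sq, sq (thetaChar (-1) 0 1), h33, h44, thetaChar_one_half_two]
  linear_combination (√2 - 1) * thetaChar 1 0 2 ^ 2 * sq_sqrt zero_le_two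

/-- At τ = i, the Jacobi theta functions satisfy θ₃(1) = 2^{1/4} · θ₄(1):
∑_{n ∈ ℤ} e^{-π n²} = 2^{1/4} · ∑_{n ∈ ℤ} (-1)^n e^{-π n²}. -/
theorem theta3_eq_rpow_two_quarter_mul_theta4_at_i :
    (∑' n : ℤ, Real.exp (-π * (n : ℝ)^2)) =
      (2 : ℝ) ^ ((1 : ℝ)/4) * ∑' n : ℤ, (-1 : ℝ) ^ n * Real.exp (-π * (n : ℝ)^2) := by
  have hθ₃ : ∑' n : ℤ, exp (-π * (n : ℝ) ^ 2) = thetaChar 1 0 1 := by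
    simp [thetaChar, thetaTerm]
  have hθ₄ : ∑' n : ℤ, (-1 : ℝ) ^ n * exp (-π * (n : ℝ) ^ 2) = thetaChar (-1) 0 1 := by
    simp [thetaChar, thetaTerm]
  have hquarter : ((2 : ℝ) ^ ((1 : ℝ) / 4)) ^ 2 = √2 := by
    rw [← rpow_natCast, ← rpow_mul zero_le_two, sqrt_eq_rpow]
    norm_num
  rw [hθ₃, hθ₄, ← pow_left_inj₀ (thetaChar_one_pos 0 one_pos).le
    (mul_nonneg (by positivity) (thetaChar_neg_one_nonneg one_pos)) two_ne_zero,
    mul_pow, hquarter, thetaChar_one_sq_eq_sqrt_two_mul_sq]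
end

section
/- At τ = i the quantity z = θ₂⁴θ₄⁴/θ₃⁸ equals 1/4; that is, θ₂(1)⁴ · θ₄(1)⁴ = (1/4) · θ₃(1)⁸, where θ₂(1) = ∑_{n ∈ ℤ} e^{-π (n + 1/2)²}, θ₃(1) = ∑_{n ∈ ℤ} e^{-π n²}, and θ₄(1) = ∑_{n ∈ ℤ} (-1)^n e^{-π n²}. -/
open Real

/-- θ₂ on the imaginary axis: θ₂(y) = ∑_{n ∈ ℤ} e^{-π y (n + 1/2)²}. -/
noncomputable def theta2 (y : ℝ) : ℝ := ∑' n : ℤ, Real.exp (-π * y * ((n : ℝ) + 1/2)^2)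

/-- θ₃ on the imaginary axis: θ₃(y) = ∑_{n ∈ ℤ} e^{-π y n²}. -/
noncomputable def theta3 (y : ℝ) : ℝ := ∑' n : ℤ, Real.exp (-π * y * (n : ℝ)^2)

/-- θ₄ on the imaginary axis: θ₄(y) = ∑_{n ∈ ℤ} (-1)^n e^{-π y n²}. -/
noncomputable def theta4 (y : ℝ) : ℝ := ∑' n : ℤ, (-1 : ℝ) ^ n * Real.exp (-π * y * (n : ℝ)^2)

namespace ZQuarter

/-- Shifted Gaussian term. -/
noncomputable def gauss (y c : ℝ) (n : ℤ) : ℝ := rexp (-π * y * ((n : ℝ) + c) ^ 2)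

/-- Signed shifted Gaussian term. -/
noncomputable def sgauss (y c : ℝ) (n : ℤ) : ℝ := (-1 : ℝ) ^ n * gauss y c n

lemma gauss_pos (y c : ℝ) (n : ℤ) : 0 < gauss y c n := Real.exp_pos _

lemma summable_gauss (y c : ℝ) (hy : 0 < y) : Summable (gauss y c) := by
  have h : Summable (jacobiTheta₂_term · ((y * c : ℝ) * Complex.I) ((y : ℝ) * Complex.I)) :=
    (summable_jacobiTheta₂_term_iff _ _).mpr (by simpa using hy)
  have h2 : Summable fun n : ℤ =>
      ‖jacobiTheta₂_term n ((y * c : ℝ) * Complex.I) ((y : ℝ) * Complex.I)‖ :=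
    summable_norm_iff.mpr h
  have h3 := h2.mul_left (rexp (-π * y * c ^ 2))
  refine h3.congr fun n => ?_
  rw [norm_jacobiTheta₂_term, ← Real.exp_add, gauss]
  congr 1
  simp only [Complex.mul_I_im, Complex.ofReal_re]
  ring

lemma summable_norm_gauss (y c : ℝ) (hy : 0 < y) : Summable fun n => ‖gauss y c n‖ :=
  (summable_gauss y c hy).congr fun n =>
    (Real.norm_of_nonneg (gauss_pos y c n).le).symm

lemma norm_sgauss (y c : ℝ) (n : ℤ) : ‖sgauss y c n‖ = gauss y c n := by
  rw [sgauss, norm_mul, norm_zpow, norm_neg, norm_one, one_zpow, one_mul,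
    Real.norm_of_nonneg (gauss_pos y c n).le]

lemma summable_norm_sgauss (y c : ℝ) (hy : 0 < y) : Summable fun n => ‖sgauss y c n‖ :=
  (summable_gauss y c hy).congr fun n => (norm_sgauss y c n).symm

lemma summable_sgauss (y c : ℝ) (hy : 0 < y) : Summable (sgauss y c) :=
  (summable_norm_sgauss y c hy).of_norm

lemma theta3_eq (y : ℝ) : theta3 y = ∑' n : ℤ, gauss y 0 n := by
  refine tsum_congr fun n => ?_
  rw [gauss, add_zero]

lemma theta2_eq (y : ℝ) : theta2 y = ∑' n : ℤ, gauss y (1/2) n := rfl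

lemma theta4_eq (y : ℝ) : theta4 y = ∑' n : ℤ, sgauss y 0 n := by
  refine tsum_congr fun n => ?_
  rw [sgauss, gauss, add_zero]

lemma neg_one_ne_zero' : (-1 : ℝ) ≠ 0 := by norm_num

/-- Even part: the sum of the "plus" combination over ℤ×ℤ. -/
lemma evenpart (y c : ℝ) (hy : 0 < y) :
    (∑' p : ℤ × ℤ, (gauss y c p.1 * gauss y c p.2 + sgauss y c p.1 * sgauss y c p.2))
      = 2 * ((∑' n : ℤ, gauss (2*y) c n) * (∑' n : ℤ, gauss (2*y) 0 n)) := by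
  set f : ℤ × ℤ → ℝ :=
    fun p => gauss y c p.1 * gauss y c p.2 + sgauss y c p.1 * sgauss y c p.2 with hf
  set φ : ℤ × ℤ → ℤ × ℤ := fun p => (p.1 + p.2, p.1 - p.2) with hφdef
  have hφ : Function.Injective φ := by
    intro p q h
    simp only [φ, Prod.mk.injEq] at h
    exact Prod.ext (by omega) (by omega)
  have hsupp : Function.support f ⊆ Set.range φ := by
    intro p hp
    rcases Int.even_or_odd (p.1 + p.2) with he | ho
    · obtain ⟨k, hk⟩ := he
      exact ⟨(k, p.1 - k), Prod.ext (by simp only [hφdef]; omega) (by simp only [hφdef]; omega)⟩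
    · exfalso; apply hp
      have hodd : (-1 : ℝ) ^ p.1 * (-1 : ℝ) ^ p.2 = -1 := by
        rw [← zpow_add₀ neg_one_ne_zero']
        exact ho.neg_one_zpow
      have h2 : f p = gauss y c p.1 * gauss y c p.2 * (1 + (-1:ℝ) ^ p.1 * (-1:ℝ) ^ p.2) := by
        simp only [hf, sgauss]; ring
      rw [h2, hodd]
      ring
  have hterm : ∀ p : ℤ × ℤ, f (φ p) = 2 * (gauss (2*y) c p.1 * gauss (2*y) 0 p.2) := by
    intro p
    have hsign : (-1 : ℝ) ^ (p.1 + p.2) * (-1 : ℝ) ^ (p.1 - p.2) = 1 := by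
      rw [← zpow_add₀ neg_one_ne_zero']
      exact Even.neg_one_zpow ⟨p.1, by ring⟩
    have hE : gauss y c (p.1 + p.2) * gauss y c (p.1 - p.2)
        = gauss (2*y) c p.1 * gauss (2*y) 0 p.2 := by
      simp only [gauss, ← Real.exp_add]
      congr 1
      push_cast
      ring
    have : f (φ p) = (1 + (-1:ℝ) ^ (p.1 + p.2) * (-1:ℝ) ^ (p.1 - p.2)) *
        (gauss y c (p.1 + p.2) * gauss y c (p.1 - p.2)) := by
      simp only [hf, hφdef, sgauss]; ring
    rw [this, hsign, hE]
    ring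
  calc (∑' p : ℤ × ℤ, f p) = ∑' p : ℤ × ℤ, f (φ p) := (hφ.tsum_eq hsupp).symm
    _ = ∑' p : ℤ × ℤ, 2 * (gauss (2*y) c p.1 * gauss (2*y) 0 p.2) := tsum_congr hterm
    _ = 2 * ∑' p : ℤ × ℤ, gauss (2*y) c p.1 * gauss (2*y) 0 p.2 := tsum_mul_left
    _ = 2 * ((∑' n : ℤ, gauss (2*y) c n) * (∑' n : ℤ, gauss (2*y) 0 n)) := by
        rw [tsum_mul_tsum_of_summable_norm (summable_norm_gauss _ _ (by linarith))
          (summable_norm_gauss _ _ (by linarith))]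

/-- Odd part: the sum of the "minus" combination over ℤ×ℤ. -/
lemma oddpart (y c : ℝ) (hy : 0 < y) :
    (∑' p : ℤ × ℤ, (gauss y c p.1 * gauss y c p.2 - sgauss y c p.1 * sgauss y c p.2))
      = 2 * ((∑' n : ℤ, gauss (2*y) (c + 1/2) n) * (∑' n : ℤ, gauss (2*y) (1/2) n)) := by
  set f : ℤ × ℤ → ℝ :=
    fun p => gauss y c p.1 * gauss y c p.2 - sgauss y c p.1 * sgauss y c p.2 with hf
  set φ : ℤ × ℤ → ℤ × ℤ := fun p => (p.1 + p.2 + 1, p.1 - p.2) with hφdef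
  have hφ : Function.Injective φ := by
    intro p q h
    simp only [φ, Prod.mk.injEq] at h
    exact Prod.ext (by omega) (by omega)
  have hsupp : Function.support f ⊆ Set.range φ := by
    intro p hp
    rcases Int.even_or_odd (p.1 + p.2) with he | ho
    · exfalso; apply hp
      have hev : (-1 : ℝ) ^ p.1 * (-1 : ℝ) ^ p.2 = 1 := by
        rw [← zpow_add₀ neg_one_ne_zero']
        exact he.neg_one_zpow
      have h2 : f p = gauss y c p.1 * gauss y c p.2 * (1 - (-1:ℝ) ^ p.1 * (-1:ℝ) ^ p.2) := by
        simp only [hf, sgauss]; ring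
      rw [h2, hev]
      ring
    · obtain ⟨k, hk⟩ := ho
      exact ⟨(k, p.1 - k - 1), Prod.ext (by simp only [hφdef]; omega) (by simp only [hφdef]; omega)⟩
  have hterm : ∀ p : ℤ × ℤ, f (φ p) = 2 * (gauss (2*y) (c + 1/2) p.1 * gauss (2*y) (1/2) p.2) := by
    intro p
    have hsign : (-1 : ℝ) ^ (p.1 + p.2 + 1) * (-1 : ℝ) ^ (p.1 - p.2) = -1 := by
      rw [← zpow_add₀ neg_one_ne_zero']
      exact Odd.neg_one_zpow ⟨p.1, by ring⟩
    have hE : gauss y c (p.1 + p.2 + 1) * gauss y c (p.1 - p.2)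
        = gauss (2*y) (c + 1/2) p.1 * gauss (2*y) (1/2) p.2 := by
      simp only [gauss, ← Real.exp_add]
      congr 1
      push_cast
      ring
    have : f (φ p) = (1 - (-1:ℝ) ^ (p.1 + p.2 + 1) * (-1:ℝ) ^ (p.1 - p.2)) *
        (gauss y c (p.1 + p.2 + 1) * gauss y c (p.1 - p.2)) := by
      simp only [hf, hφdef, sgauss]; ring
    rw [this, hsign, hE]
    ring
  calc (∑' p : ℤ × ℤ, f p) = ∑' p : ℤ × ℤ, f (φ p) := (hφ.tsum_eq hsupp).symm
    _ = ∑' p : ℤ × ℤ, 2 * (gauss (2*y) (c + 1/2) p.1 * gauss (2*y) (1/2) p.2) := tsum_congr hterm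
    _ = 2 * ∑' p : ℤ × ℤ, gauss (2*y) (c + 1/2) p.1 * gauss (2*y) (1/2) p.2 := tsum_mul_left
    _ = 2 * ((∑' n : ℤ, gauss (2*y) (c + 1/2) n) * (∑' n : ℤ, gauss (2*y) (1/2) n)) := by
        rw [tsum_mul_tsum_of_summable_norm (summable_norm_gauss _ _ (by linarith))
          (summable_norm_gauss _ _ (by linarith))]

lemma summable_prod_gg (y c : ℝ) (hy : 0 < y) :
    Summable fun p : ℤ × ℤ => gauss y c p.1 * gauss y c p.2 :=
  ((summable_norm_gauss y c hy).mul_norm (summable_norm_gauss y c hy)).of_norm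

lemma summable_prod_ss (y c : ℝ) (hy : 0 < y) :
    Summable fun p : ℤ × ℤ => sgauss y c p.1 * sgauss y c p.2 :=
  ((summable_norm_sgauss y c hy).mul_norm (summable_norm_sgauss y c hy)).of_norm

/-- θ₃(y)² + θ₄(y)² = 2 θ₃(2y)². -/
lemma key_add (y : ℝ) (hy : 0 < y) :
    theta3 y ^ 2 + theta4 y ^ 2 = 2 * theta3 (2*y) ^ 2 := by
  have e1 : theta3 y ^ 2 = ∑' p : ℤ × ℤ, gauss y 0 p.1 * gauss y 0 p.2 := by
    rw [theta3_eq, sq]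
    exact tsum_mul_tsum_of_summable_norm (summable_norm_gauss y 0 hy) (summable_norm_gauss y 0 hy)
  have e2 : theta4 y ^ 2 = ∑' p : ℤ × ℤ, sgauss y 0 p.1 * sgauss y 0 p.2 := by
    rw [theta4_eq, sq]
    exact tsum_mul_tsum_of_summable_norm (summable_norm_sgauss y 0 hy)
      (summable_norm_sgauss y 0 hy)
  calc theta3 y ^ 2 + theta4 y ^ 2
      = (∑' p : ℤ × ℤ, gauss y 0 p.1 * gauss y 0 p.2)
        + (∑' p : ℤ × ℤ, sgauss y 0 p.1 * sgauss y 0 p.2) := by rw [e1, e2]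
    _ = ∑' p : ℤ × ℤ, (gauss y 0 p.1 * gauss y 0 p.2 + sgauss y 0 p.1 * sgauss y 0 p.2) :=
        (Summable.tsum_add (summable_prod_gg y 0 hy) (summable_prod_ss y 0 hy)).symm
    _ = 2 * ((∑' n : ℤ, gauss (2*y) 0 n) * (∑' n : ℤ, gauss (2*y) 0 n)) := evenpart y 0 hy
    _ = 2 * theta3 (2*y) ^ 2 := by rw [theta3_eq, sq]

/-- θ₃(y)² − θ₄(y)² = 2 θ₂(2y)². -/
lemma key_sub (y : ℝ) (hy : 0 < y) :
    theta3 y ^ 2 - theta4 y ^ 2 = 2 * theta2 (2*y) ^ 2 := by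
  have e1 : theta3 y ^ 2 = ∑' p : ℤ × ℤ, gauss y 0 p.1 * gauss y 0 p.2 := by
    rw [theta3_eq, sq]
    exact tsum_mul_tsum_of_summable_norm (summable_norm_gauss y 0 hy) (summable_norm_gauss y 0 hy)
  have e2 : theta4 y ^ 2 = ∑' p : ℤ × ℤ, sgauss y 0 p.1 * sgauss y 0 p.2 := by
    rw [theta4_eq, sq]
    exact tsum_mul_tsum_of_summable_norm (summable_norm_sgauss y 0 hy)
      (summable_norm_sgauss y 0 hy)
  have h0 : (0 : ℝ) + 1/2 = 1/2 := by norm_num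
  calc theta3 y ^ 2 - theta4 y ^ 2
      = (∑' p : ℤ × ℤ, gauss y 0 p.1 * gauss y 0 p.2)
        - (∑' p : ℤ × ℤ, sgauss y 0 p.1 * sgauss y 0 p.2) := by rw [e1, e2]
    _ = ∑' p : ℤ × ℤ, (gauss y 0 p.1 * gauss y 0 p.2 - sgauss y 0 p.1 * sgauss y 0 p.2) :=
        (Summable.tsum_sub (summable_prod_gg y 0 hy) (summable_prod_ss y 0 hy)).symm
    _ = 2 * ((∑' n : ℤ, gauss (2*y) (0 + 1/2) n) * (∑' n : ℤ, gauss (2*y) (1/2) n)) :=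
        oddpart y 0 hy
    _ = 2 * theta2 (2*y) ^ 2 := by rw [h0, theta2_eq, sq]

/-- Shifting the Gaussian sum by one. -/
lemma gauss_shift (y : ℝ) : (∑' n : ℤ, gauss y 1 n) = ∑' n : ℤ, gauss y 0 n := by
  have := Equiv.tsum_eq (Equiv.addRight (1 : ℤ)) (gauss y 0)
  rw [← this]
  refine tsum_congr fun n => ?_
  simp only [Equiv.coe_addRight, gauss]
  congr 1
  push_cast
  ring

/-- θ₂(y)² = 2 θ₂(2y) θ₃(2y). -/
lemma key_two (y : ℝ) (hy : 0 < y) :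
    theta2 y ^ 2 = 2 * (theta2 (2*y) * theta3 (2*y)) := by
  have e1 : theta2 y ^ 2 = ∑' p : ℤ × ℤ, gauss y (1/2) p.1 * gauss y (1/2) p.2 := by
    rw [theta2_eq, sq]
    exact tsum_mul_tsum_of_summable_norm (summable_norm_gauss y (1/2) hy)
      (summable_norm_gauss y (1/2) hy)
  have hdouble : 2 * theta2 y ^ 2
      = (∑' p : ℤ × ℤ, (gauss y (1/2) p.1 * gauss y (1/2) p.2
          + sgauss y (1/2) p.1 * sgauss y (1/2) p.2))
        + (∑' p : ℤ × ℤ, (gauss y (1/2) p.1 * gauss y (1/2) p.2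
          - sgauss y (1/2) p.1 * sgauss y (1/2) p.2)) := by
    calc 2 * theta2 y ^ 2
        = 2 * ∑' p : ℤ × ℤ, gauss y (1/2) p.1 * gauss y (1/2) p.2 := by rw [e1]
      _ = ∑' p : ℤ × ℤ, 2 * (gauss y (1/2) p.1 * gauss y (1/2) p.2) := tsum_mul_left.symm
      _ = ∑' p : ℤ × ℤ, ((gauss y (1/2) p.1 * gauss y (1/2) p.2
            + sgauss y (1/2) p.1 * sgauss y (1/2) p.2)
          + (gauss y (1/2) p.1 * gauss y (1/2) p.2
            - sgauss y (1/2) p.1 * sgauss y (1/2) p.2)) := tsum_congr fun p => by ring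
      _ = _ := Summable.tsum_add ((summable_prod_gg y (1/2) hy).add (summable_prod_ss y (1/2) hy))
          ((summable_prod_gg y (1/2) hy).sub (summable_prod_ss y (1/2) hy))
  have h1 := evenpart y (1/2) hy
  have h2 := oddpart y (1/2) hy
  have hhalf : (1/2 : ℝ) + 1/2 = 1 := by norm_num
  rw [hhalf] at h2
  rw [h1, h2, gauss_shift (2*y), ← theta2_eq (2*y), ← theta3_eq (2*y)] at hdouble
  linear_combination hdouble / 2

/-- θ₂(1) = θ₄(1), by Poisson summation (the functional equation at the fixed point τ = i). -/
lemma theta2_one_eq_theta4_one : theta2 1 = theta4 1 := by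
  have key := Complex.tsum_exp_neg_quadratic (a := 1) (by norm_num) (Complex.I / 2)
  have hL : (∑' n : ℤ, Complex.exp (-π * 1 * (n : ℂ) ^ 2 + 2 * π * (Complex.I / 2) * n))
      = (theta4 1 : ℂ) := by
    unfold theta4
    rw [Complex.ofReal_tsum]
    refine tsum_congr fun n => ?_
    have : (-π * 1 * (n : ℂ) ^ 2 + 2 * π * (Complex.I / 2) * n)
        = (n : ℂ) * (π * Complex.I) + (-π * 1 * (n : ℝ) ^ 2 : ℝ) := by
      push_cast; ring
    rw [this, Complex.exp_add, Complex.exp_int_mul, Complex.exp_pi_mul_I]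
    push_cast
    ring
  have hR : (∑' n : ℤ, Complex.exp (-π / 1 * ((n : ℂ) + Complex.I * (Complex.I / 2)) ^ 2))
      = (theta2 1 : ℂ) := by
    unfold theta2
    rw [Complex.ofReal_tsum]
    rw [← Equiv.tsum_eq (Equiv.addRight (1 : ℤ))
      (fun n : ℤ => Complex.exp (-π / 1 * ((n : ℂ) + Complex.I * (Complex.I / 2)) ^ 2))]
    refine tsum_congr fun n => ?_
    simp only [Equiv.coe_addRight]
    rw [Complex.ofReal_exp]
    congr 1
    have hI : Complex.I * (Complex.I / 2) = -(1/2 : ℂ) := by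
      rw [show Complex.I * (Complex.I / 2) = Complex.I ^ 2 / 2 from by ring, Complex.I_sq]
      norm_num
    rw [hI]
    push_cast
    ring
  rw [hL, hR, Complex.one_cpow] at key
  have : (theta4 1 : ℂ) = (theta2 1 : ℂ) := by rw [key]; ring
  exact (Complex.ofReal_inj.mp this).symm

end ZQuarter

/-- At τ = i, the quantity z = θ₂⁴θ₄⁴/θ₃⁸ equals 1/4, i.e.
θ₂(1)⁴ · θ₄(1)⁴ = (1/4) · θ₃(1)⁸. -/
theorem z_at_i_eq_quarter :
    theta2 1 ^ 4 * theta4 1 ^ 4 = (1/4 : ℝ) * theta3 1 ^ 8 := by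
  have h1 := ZQuarter.key_add 1 one_pos
  have h2 := ZQuarter.key_sub 1 one_pos
  have h3 := ZQuarter.key_two 1 one_pos
  have h4 := ZQuarter.theta2_one_eq_theta4_one
  set a := theta2 1
  set b := theta3 1
  set c := theta4 1
  set d := theta2 (2*1)
  set e := theta3 (2*1)
  -- b⁴ = 2c⁴
  have hb : b ^ 4 = 2 * c ^ 4 := by
    linear_combination (b^2 + c^2) * h2 + 2 * d^2 * h1 - (a^2 + 2*d*e) * h3
      + (a^3 + a^2*c + a*c^2 + c^3) * h4
  rw [h4]
  linear_combination (-(1/4 : ℝ)) * (b^4 + 2*c^4) * hb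
end

section
/- For every real y > 0, one has 0 ≤ θ₂(y)⁴ · θ₄(y)⁴ / θ₃(y)⁸ ≤ 1/4; that is, the quantity z(y) = θ₂(y)⁴θ₄(y)⁴/θ₃(y)⁸ lies in the interval [0, 1/4] on the whole positive imaginary axis τ = iy. -/
open Real

/- ### Auxiliary summability lemmas -/

lemma summable_theta_aux (a : ℝ) {y : ℝ} (hy : 0 < y) :
    Summable (fun n : ℤ => Real.exp (-π * y * ((n : ℝ) + a)^2)) := by
  refine (HurwitzKernelBounds.summable_f_int 0 a hy).congr fun n => ?_
  rw [HurwitzKernelBounds.f_int, pow_zero, one_mul]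
  congr 1
  ring

lemma summable_theta3_term {y : ℝ} (hy : 0 < y) :
    Summable (fun n : ℤ => Real.exp (-π * y * (n : ℝ)^2)) := by
  simpa using summable_theta_aux 0 hy

lemma summable_theta2_term {y : ℝ} (hy : 0 < y) :
    Summable (fun n : ℤ => Real.exp (-π * y * ((n : ℝ) + 1/2)^2)) :=
  summable_theta_aux (1/2) hy

lemma summable_theta4_term {y : ℝ} (hy : 0 < y) :
    Summable (fun n : ℤ => (-1 : ℝ) ^ n * Real.exp (-π * y * (n : ℝ)^2)) := by
  refine Summable.of_norm ?_
  refine (summable_theta3_term hy).congr fun n => ?_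
  rw [norm_mul, norm_zpow, norm_neg, norm_one, one_zpow, one_mul,
    Real.norm_eq_abs, abs_of_pos (Real.exp_pos _)]

/- ### Positivity -/

lemma theta3_pos {y : ℝ} (hy : 0 < y) : 0 < theta3 y :=
  Summable.tsum_pos (summable_theta3_term hy) (fun _ => (Real.exp_pos _).le) 0 (Real.exp_pos _)

lemma theta2_pos {y : ℝ} (hy : 0 < y) : 0 < theta2 y :=
  Summable.tsum_pos (summable_theta2_term hy) (fun _ => (Real.exp_pos _).le) 0 (Real.exp_pos _)

/- ### Splitting a sum over ℤ × ℤ along two complementary injections -/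

lemma hasSum_split {j1 j2 : ℤ × ℤ → ℤ × ℤ}
    (inj1 : Function.Injective j1) (inj2 : Function.Injective j2)
    (disj : Disjoint (Set.range j1) (Set.range j2))
    (union : Set.range j1 ∪ Set.range j2 = Set.univ)
    {h : ℤ × ℤ → ℝ} {s1 s2 : ℝ}
    (h1 : HasSum (h ∘ j1) s1) (h2 : HasSum (h ∘ j2) s2) :
    HasSum h (s1 + s2) := by
  have H1 := (inj1.hasSum_range_iff (f := h)).mpr h1
  have H2 := (inj2.hasSum_range_iff (f := h)).mpr h2
  have H := H1.add_disjoint disj H2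
  rw [union] at H
  exact (hasSum_subtype_iff_of_support_subset (Set.subset_univ _)).mp H

def jee : ℤ × ℤ → ℤ × ℤ := fun p => (p.1 + p.2, p.1 - p.2)
def joo : ℤ × ℤ → ℤ × ℤ := fun p => (p.1 + p.2 + 1, p.1 - p.2)
def jem : ℤ × ℤ → ℤ × ℤ := fun p => (p.1 + p.2, p.1 - p.2 - 1)

lemma jee_inj : Function.Injective jee := by
  rintro ⟨a, b⟩ ⟨c, d⟩ h
  simp only [jee, Prod.mk.injEq] at h ⊢
  omega

lemma joo_inj : Function.Injective joo := by
  rintro ⟨a, b⟩ ⟨c, d⟩ h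
  simp only [joo, Prod.mk.injEq] at h ⊢
  omega

lemma jem_inj : Function.Injective jem := by
  rintro ⟨a, b⟩ ⟨c, d⟩ h
  simp only [jem, Prod.mk.injEq] at h ⊢
  omega

lemma jee_joo_disj : Disjoint (Set.range jee) (Set.range joo) := by
  rw [Set.disjoint_left]
  rintro p ⟨⟨a, b⟩, rfl⟩ ⟨⟨c, d⟩, h⟩
  simp only [jee, joo, Prod.mk.injEq] at h
  omega

lemma jee_joo_union : Set.range jee ∪ Set.range joo = Set.univ := by
  ext ⟨m, n⟩
  simp only [Set.mem_union, Set.mem_range, Set.mem_univ, iff_true]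
  rcases Int.even_or_odd (m + n) with ⟨k, hk⟩ | ⟨k, hk⟩
  · exact Or.inl ⟨(k, m - k), by simp only [jee, Prod.mk.injEq]; omega⟩
  · exact Or.inr ⟨(k, m - 1 - k), by simp only [joo, Prod.mk.injEq]; omega⟩

lemma jem_jee_disj : Disjoint (Set.range jem) (Set.range jee) := by
  rw [Set.disjoint_left]
  rintro p ⟨⟨a, b⟩, rfl⟩ ⟨⟨c, d⟩, h⟩
  simp only [jee, jem, Prod.mk.injEq] at h
  omega

lemma jem_jee_union : Set.range jem ∪ Set.range jee = Set.univ := by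
  ext ⟨m, n⟩
  simp only [Set.mem_union, Set.mem_range, Set.mem_univ, iff_true]
  rcases Int.even_or_odd (m - n) with ⟨k, hk⟩ | ⟨k, hk⟩
  · exact Or.inr ⟨(m - k, k), by simp only [jee, Prod.mk.injEq]; omega⟩
  · exact Or.inl ⟨(m - k, k), by simp only [jem, Prod.mk.injEq]; omega⟩

/- ### The Landen/Gauss doubling identities -/

lemma theta3_sq {y : ℝ} (hy : 0 < y) :
    theta3 y ^ 2 = theta3 (2 * y) ^ 2 + theta2 (2 * y) ^ 2 := by
  have h2y : (0 : ℝ) < 2 * y := by linarith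
  have hfs := summable_theta3_term hy
  have hFs := summable_theta3_term h2y
  have hGs := summable_theta2_term h2y
  have hfs0 : (0 : ℤ → ℝ) ≤ fun n : ℤ => Real.exp (-π * y * (n : ℝ)^2) :=
    fun _ => (Real.exp_pos _).le
  have hFs0 : (0 : ℤ → ℝ) ≤ fun n : ℤ => Real.exp (-π * (2 * y) * (n : ℝ)^2) :=
    fun _ => (Real.exp_pos _).le
  have hGs0 : (0 : ℤ → ℝ) ≤ fun n : ℤ => Real.exp (-π * (2 * y) * ((n : ℝ) + 1/2)^2) :=
    fun _ => (Real.exp_pos _).le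
  have hfsum : HasSum (fun p : ℤ × ℤ =>
      Real.exp (-π * y * (p.1 : ℝ)^2) * Real.exp (-π * y * (p.2 : ℝ)^2))
      (theta3 y * theta3 y) := by
    apply HasSum.mul hfs.hasSum hfs.hasSum
    apply Summable.mul_of_nonneg hfs hfs hfs0 hfs0
  have hFF : HasSum (fun p : ℤ × ℤ =>
      Real.exp (-π * (2 * y) * (p.1 : ℝ)^2) * Real.exp (-π * (2 * y) * (p.2 : ℝ)^2))
      (theta3 (2 * y) * theta3 (2 * y)) := by
    apply HasSum.mul hFs.hasSum hFs.hasSum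
    apply Summable.mul_of_nonneg hFs hFs hFs0 hFs0
  have hGG : HasSum (fun p : ℤ × ℤ =>
      Real.exp (-π * (2 * y) * ((p.1 : ℝ) + 1/2)^2) *
        Real.exp (-π * (2 * y) * ((p.2 : ℝ) + 1/2)^2))
      (theta2 (2 * y) * theta2 (2 * y)) := by
    apply HasSum.mul hGs.hasSum hGs.hasSum
    apply Summable.mul_of_nonneg hGs hGs hGs0 hGs0
  have e1 : ((fun p : ℤ × ℤ =>
      Real.exp (-π * y * (p.1 : ℝ)^2) * Real.exp (-π * y * (p.2 : ℝ)^2)) ∘ jee) =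
      fun p : ℤ × ℤ =>
        Real.exp (-π * (2 * y) * (p.1 : ℝ)^2) * Real.exp (-π * (2 * y) * (p.2 : ℝ)^2) := by
    funext ⟨a, b⟩
    simp only [Function.comp_apply, jee]
    rw [← Real.exp_add, ← Real.exp_add]
    congr 1
    push_cast
    ring
  have e2 : ((fun p : ℤ × ℤ =>
      Real.exp (-π * y * (p.1 : ℝ)^2) * Real.exp (-π * y * (p.2 : ℝ)^2)) ∘ joo) =
      fun p : ℤ × ℤ =>
        Real.exp (-π * (2 * y) * ((p.1 : ℝ) + 1/2)^2) *
          Real.exp (-π * (2 * y) * ((p.2 : ℝ) + 1/2)^2) := by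
    funext ⟨a, b⟩
    simp only [Function.comp_apply, joo]
    rw [← Real.exp_add, ← Real.exp_add]
    congr 1
    push_cast
    ring
  have h1 : HasSum ((fun p : ℤ × ℤ =>
      Real.exp (-π * y * (p.1 : ℝ)^2) * Real.exp (-π * y * (p.2 : ℝ)^2)) ∘ jee)
      (theta3 (2 * y) * theta3 (2 * y)) := by rw [e1]; exact hFF
  have h2 : HasSum ((fun p : ℤ × ℤ =>
      Real.exp (-π * y * (p.1 : ℝ)^2) * Real.exp (-π * y * (p.2 : ℝ)^2)) ∘ joo)
      (theta2 (2 * y) * theta2 (2 * y)) := by rw [e2]; exact hGG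
  have H := hasSum_split jee_inj joo_inj jee_joo_disj jee_joo_union h1 h2
  have key := hfsum.unique H
  rw [sq, sq, sq, key]

lemma theta4_sq {y : ℝ} (hy : 0 < y) :
    theta4 y ^ 2 = theta3 (2 * y) ^ 2 - theta2 (2 * y) ^ 2 := by
  have h2y : (0 : ℝ) < 2 * y := by linarith
  have hm1 : (-1 : ℝ) ≠ 0 := by norm_num
  have hfs := summable_theta4_term hy
  have hes := summable_theta3_term hy
  have hFs := summable_theta3_term h2y
  have hGs := summable_theta2_term h2y
  have hes0 : (0 : ℤ → ℝ) ≤ fun n : ℤ => Real.exp (-π * y * (n : ℝ)^2) :=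
    fun _ => (Real.exp_pos _).le
  have hFs0 : (0 : ℤ → ℝ) ≤ fun n : ℤ => Real.exp (-π * (2 * y) * (n : ℝ)^2) :=
    fun _ => (Real.exp_pos _).le
  have hGs0 : (0 : ℤ → ℝ) ≤ fun n : ℤ => Real.exp (-π * (2 * y) * ((n : ℝ) + 1/2)^2) :=
    fun _ => (Real.exp_pos _).le
  have habs : ∀ n : ℤ, ‖(-1 : ℝ) ^ n * Real.exp (-π * y * (n : ℝ)^2)‖ =
      Real.exp (-π * y * (n : ℝ)^2) := by
    intro n
    rw [norm_mul, norm_zpow, norm_neg, norm_one, one_zpow, one_mul,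
      Real.norm_eq_abs, abs_of_pos (Real.exp_pos _)]
  have hfprod : Summable (fun p : ℤ × ℤ =>
      ((-1 : ℝ) ^ p.1 * Real.exp (-π * y * (p.1 : ℝ)^2)) *
        ((-1 : ℝ) ^ p.2 * Real.exp (-π * y * (p.2 : ℝ)^2))) := by
    apply Summable.of_norm
    have base : Summable (fun p : ℤ × ℤ =>
        Real.exp (-π * y * (p.1 : ℝ)^2) * Real.exp (-π * y * (p.2 : ℝ)^2)) := by
      apply Summable.mul_of_nonneg hes hes hes0 hes0
    refine base.congr fun p => ?_
    rw [norm_mul, habs, habs]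
  have hfsum : HasSum (fun p : ℤ × ℤ =>
      ((-1 : ℝ) ^ p.1 * Real.exp (-π * y * (p.1 : ℝ)^2)) *
        ((-1 : ℝ) ^ p.2 * Real.exp (-π * y * (p.2 : ℝ)^2)))
      (theta4 y * theta4 y) := by
    apply HasSum.mul hfs.hasSum hfs.hasSum hfprod
  have hFF : HasSum (fun p : ℤ × ℤ =>
      Real.exp (-π * (2 * y) * (p.1 : ℝ)^2) * Real.exp (-π * (2 * y) * (p.2 : ℝ)^2))
      (theta3 (2 * y) * theta3 (2 * y)) := by
    apply HasSum.mul hFs.hasSum hFs.hasSum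
    apply Summable.mul_of_nonneg hFs hFs hFs0 hFs0
  have hGG : HasSum (fun p : ℤ × ℤ =>
      -(Real.exp (-π * (2 * y) * ((p.1 : ℝ) + 1/2)^2) *
        Real.exp (-π * (2 * y) * ((p.2 : ℝ) + 1/2)^2)))
      (-(theta2 (2 * y) * theta2 (2 * y))) := by
    apply HasSum.neg
    apply HasSum.mul hGs.hasSum hGs.hasSum
    apply Summable.mul_of_nonneg hGs hGs hGs0 hGs0
  have e1 : ((fun p : ℤ × ℤ =>
      ((-1 : ℝ) ^ p.1 * Real.exp (-π * y * (p.1 : ℝ)^2)) *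
        ((-1 : ℝ) ^ p.2 * Real.exp (-π * y * (p.2 : ℝ)^2))) ∘ jee) =
      fun p : ℤ × ℤ =>
        Real.exp (-π * (2 * y) * (p.1 : ℝ)^2) * Real.exp (-π * (2 * y) * (p.2 : ℝ)^2) := by
    funext ⟨a, b⟩
    simp only [Function.comp_apply, jee]
    have hsgn : (-1 : ℝ) ^ (a + b) * (-1 : ℝ) ^ (a - b) = 1 := by
      rw [← zpow_add₀ hm1, show a + b + (a - b) = 2 * a by ring, zpow_mul]
      norm_num
    rw [mul_mul_mul_comm, hsgn, one_mul, ← Real.exp_add, ← Real.exp_add]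
    congr 1
    push_cast
    ring
  have e2 : ((fun p : ℤ × ℤ =>
      ((-1 : ℝ) ^ p.1 * Real.exp (-π * y * (p.1 : ℝ)^2)) *
        ((-1 : ℝ) ^ p.2 * Real.exp (-π * y * (p.2 : ℝ)^2))) ∘ joo) =
      fun p : ℤ × ℤ =>
        -(Real.exp (-π * (2 * y) * ((p.1 : ℝ) + 1/2)^2) *
          Real.exp (-π * (2 * y) * ((p.2 : ℝ) + 1/2)^2)) := by
    funext ⟨a, b⟩
    simp only [Function.comp_apply, joo]
    have hsgn : (-1 : ℝ) ^ (a + b + 1) * (-1 : ℝ) ^ (a - b) = -1 := by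
      rw [← zpow_add₀ hm1, show a + b + 1 + (a - b) = 2 * a + 1 by ring,
        zpow_add₀ hm1, zpow_mul]
      norm_num
    rw [mul_mul_mul_comm, hsgn, neg_one_mul, ← Real.exp_add, ← Real.exp_add]
    congr 2
    push_cast
    ring
  have h1 : HasSum ((fun p : ℤ × ℤ =>
      ((-1 : ℝ) ^ p.1 * Real.exp (-π * y * (p.1 : ℝ)^2)) *
        ((-1 : ℝ) ^ p.2 * Real.exp (-π * y * (p.2 : ℝ)^2))) ∘ jee)
      (theta3 (2 * y) * theta3 (2 * y)) := by rw [e1]; exact hFF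
  have h2 : HasSum ((fun p : ℤ × ℤ =>
      ((-1 : ℝ) ^ p.1 * Real.exp (-π * y * (p.1 : ℝ)^2)) *
        ((-1 : ℝ) ^ p.2 * Real.exp (-π * y * (p.2 : ℝ)^2))) ∘ joo)
      (-(theta2 (2 * y) * theta2 (2 * y))) := by rw [e2]; exact hGG
  have H := hasSum_split jee_inj joo_inj jee_joo_disj jee_joo_union h1 h2
  have key := hfsum.unique H
  rw [sq, sq, sq, key]
  ring

lemma theta2_sq {y : ℝ} (hy : 0 < y) :
    theta2 y ^ 2 = 2 * theta2 (2 * y) * theta3 (2 * y) := by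
  have h2y : (0 : ℝ) < 2 * y := by linarith
  have hfs := summable_theta2_term hy
  have hFs := summable_theta3_term h2y
  have hGs := summable_theta2_term h2y
  have hfs0 : (0 : ℤ → ℝ) ≤ fun n : ℤ => Real.exp (-π * y * ((n : ℝ) + 1/2)^2) :=
    fun _ => (Real.exp_pos _).le
  have hFs0 : (0 : ℤ → ℝ) ≤ fun n : ℤ => Real.exp (-π * (2 * y) * (n : ℝ)^2) :=
    fun _ => (Real.exp_pos _).le
  have hGs0 : (0 : ℤ → ℝ) ≤ fun n : ℤ => Real.exp (-π * (2 * y) * ((n : ℝ) + 1/2)^2) :=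
    fun _ => (Real.exp_pos _).le
  have hfsum : HasSum (fun p : ℤ × ℤ =>
      Real.exp (-π * y * ((p.1 : ℝ) + 1/2)^2) * Real.exp (-π * y * ((p.2 : ℝ) + 1/2)^2))
      (theta2 y * theta2 y) := by
    apply HasSum.mul hfs.hasSum hfs.hasSum
    apply Summable.mul_of_nonneg hfs hfs hfs0 hfs0
  have hFG : HasSum (fun p : ℤ × ℤ =>
      Real.exp (-π * (2 * y) * (p.1 : ℝ)^2) *
        Real.exp (-π * (2 * y) * ((p.2 : ℝ) + 1/2)^2))
      (theta3 (2 * y) * theta2 (2 * y)) := by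
    apply HasSum.mul hFs.hasSum hGs.hasSum
    apply Summable.mul_of_nonneg hFs hGs hFs0 hGs0
  have hGF : HasSum (fun p : ℤ × ℤ =>
      Real.exp (-π * (2 * y) * ((p.1 : ℝ) + 1/2)^2) *
        Real.exp (-π * (2 * y) * (p.2 : ℝ)^2))
      (theta2 (2 * y) * theta3 (2 * y)) := by
    apply HasSum.mul hGs.hasSum hFs.hasSum
    apply Summable.mul_of_nonneg hGs hFs hGs0 hFs0
  have e1 : ((fun p : ℤ × ℤ =>
      Real.exp (-π * y * ((p.1 : ℝ) + 1/2)^2) * Real.exp (-π * y * ((p.2 : ℝ) + 1/2)^2)) ∘ jem) =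
      fun p : ℤ × ℤ =>
        Real.exp (-π * (2 * y) * (p.1 : ℝ)^2) *
          Real.exp (-π * (2 * y) * ((p.2 : ℝ) + 1/2)^2) := by
    funext ⟨a, b⟩
    simp only [Function.comp_apply, jem]
    rw [← Real.exp_add, ← Real.exp_add]
    congr 1
    push_cast
    ring
  have e2 : ((fun p : ℤ × ℤ =>
      Real.exp (-π * y * ((p.1 : ℝ) + 1/2)^2) * Real.exp (-π * y * ((p.2 : ℝ) + 1/2)^2)) ∘ jee) =
      fun p : ℤ × ℤ =>
        Real.exp (-π * (2 * y) * ((p.1 : ℝ) + 1/2)^2) *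
          Real.exp (-π * (2 * y) * (p.2 : ℝ)^2) := by
    funext ⟨a, b⟩
    simp only [Function.comp_apply, jee]
    rw [← Real.exp_add, ← Real.exp_add]
    congr 1
    push_cast
    ring
  have h1 : HasSum ((fun p : ℤ × ℤ =>
      Real.exp (-π * y * ((p.1 : ℝ) + 1/2)^2) *
        Real.exp (-π * y * ((p.2 : ℝ) + 1/2)^2)) ∘ jem)
      (theta3 (2 * y) * theta2 (2 * y)) := by rw [e1]; exact hFG
  have h2 : HasSum ((fun p : ℤ × ℤ =>
      Real.exp (-π * y * ((p.1 : ℝ) + 1/2)^2) *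
        Real.exp (-π * y * ((p.2 : ℝ) + 1/2)^2)) ∘ jee)
      (theta2 (2 * y) * theta3 (2 * y)) := by rw [e2]; exact hGF
  have H := hasSum_split jem_inj jee_inj jem_jee_disj jem_jee_union h1 h2
  have key := hfsum.unique H
  rw [sq, key]
  ring

/-- For every real y > 0, the quantity z(y) = θ₂(y)⁴θ₄(y)⁴/θ₃(y)⁸ lies in [0, 1/4]. -/
theorem z_mem_Icc (y : ℝ) (hy : 0 < y) :
    0 ≤ theta2 y ^ 4 * theta4 y ^ 4 / theta3 y ^ 8 ∧
      theta2 y ^ 4 * theta4 y ^ 4 / theta3 y ^ 8 ≤ 1/4 := by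
  have h2y : (0 : ℝ) < 2 * y := by linarith
  have h3 := theta3_sq hy
  have h4 := theta4_sq hy
  have h2 := theta2_sq hy
  have hA : 0 < theta3 (2 * y) := theta3_pos h2y
  have hB : 0 < theta2 (2 * y) := theta2_pos h2y
  have h3pos : 0 < theta3 y := theta3_pos hy
  set A := theta3 (2 * y) with hAdef
  set B := theta2 (2 * y) with hBdef
  constructor
  · positivity
  · rw [div_le_iff₀ (by positivity)]
    have e2 : theta2 y ^ 4 = (2 * B * A) ^ 2 := by
      rw [show theta2 y ^ 4 = (theta2 y ^ 2) ^ 2 by ring, h2]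
    have e4 : theta4 y ^ 4 = (A ^ 2 - B ^ 2) ^ 2 := by
      rw [show theta4 y ^ 4 = (theta4 y ^ 2) ^ 2 by ring, h4]
    have e3 : theta3 y ^ 8 = (A ^ 2 + B ^ 2) ^ 4 := by
      rw [show theta3 y ^ 8 = (theta3 y ^ 2) ^ 4 by ring, h3]
    rw [e2, e4, e3]
    nlinarith [sq_nonneg (A ^ 4 - 6 * A ^ 2 * B ^ 2 + B ^ 4), sq_nonneg A, sq_nonneg B,
      sq_nonneg (A * B), sq_nonneg (A ^ 2 - B ^ 2), sq_nonneg (A ^ 2 + B ^ 2)]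
end

section
/- (Determination of the coefficients a₁ and a₂ from the kissing number.) Let n ≥ 17 be an integer, K a real number, and a₁, a₂ real numbers. If the function f(y) = θ₃(y)^n + a₁ · θ₃(y)^{n−8} · Δ₈(y) + a₂ · θ₃(y)^{n−16} · Δ₈(y)² satisfies f(y) − 1 − K·e^{−2πy} = O(e^{−3πy}) as y → ∞, then a₁ = −2n and a₂ = 2n(n − 23) + K. -/
open Real Filter Asymptotics Topology

/-- Δ₈ on the imaginary axis: Δ₈(y) = (1/16) θ₂(y)⁴ θ₄(y)⁴. -/
noncomputable def Delta8 (y : ℝ) : ℝ := (1/16 : ℝ) * theta2 y ^ 4 * theta4 y ^ 4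

/-! ### Geometric tail bounds -/

lemma master_bound (y : ℝ) (hy : 1 ≤ y) (c : ℝ) (hc : 0 ≤ c) :
    Summable (fun k : ℕ => Real.exp (-π * y * ((k : ℝ) + c)^2)) ∧
    (∑' k : ℕ, Real.exp (-π * y * ((k : ℝ) + c)^2)) ≤ 2 * Real.exp (-π * y * c^2) := by
  have hπy : (0:ℝ) < π * y := mul_pos pi_pos (lt_of_lt_of_le one_pos hy)
  have hterm : ∀ k : ℕ, Real.exp (-π * y * ((k : ℝ) + c)^2)
      ≤ Real.exp (-π * y * c^2) * Real.exp (-(π * y)) ^ k := by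
    intro k
    rw [← Real.exp_nat_mul, ← Real.exp_add]
    apply Real.exp_le_exp.2
    have hk : (0:ℝ) ≤ (k:ℝ) := Nat.cast_nonneg k
    have hk2 : (k:ℝ) ≤ (k:ℝ)^2 := by
      have : k ≤ k^2 := Nat.le_self_pow two_ne_zero k
      exact_mod_cast this
    nlinarith [mul_nonneg (mul_nonneg hk hc) hπy.le, mul_le_mul_of_nonneg_right hk2 hπy.le]
  have hrlt : Real.exp (-(π * y)) < 1 := Real.exp_lt_one_iff.2 (by linarith)
  have hgeom : Summable (fun k : ℕ => Real.exp (-π * y * c^2) * Real.exp (-(π * y)) ^ k) :=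
    (summable_geometric_of_lt_one (Real.exp_nonneg _) hrlt).mul_left _
  have hsum : Summable (fun k : ℕ => Real.exp (-π * y * ((k : ℝ) + c)^2)) :=
    Summable.of_nonneg_of_le (fun k => Real.exp_nonneg _) hterm hgeom
  refine ⟨hsum, ?_⟩
  have hr1 : Real.exp (-(π * y)) ≤ 1/2 := by
    have h1 : Real.exp (-(π * y)) ≤ Real.exp (-1) := Real.exp_le_exp.2 (by nlinarith [pi_gt_three])
    have h2 : (2:ℝ) ≤ Real.exp 1 := by have := Real.add_one_le_exp (1:ℝ); linarith
    have h3 : Real.exp (-1) ≤ 1/2 := by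
      rw [Real.exp_neg]
      rw [inv_le_comm₀ (Real.exp_pos 1) (by norm_num)] at *
      · linarith
    linarith
  calc (∑' k : ℕ, Real.exp (-π * y * ((k : ℝ) + c)^2))
      ≤ ∑' k : ℕ, Real.exp (-π * y * c^2) * Real.exp (-(π * y)) ^ k :=
        Summable.tsum_le_tsum hterm hsum hgeom
    _ = Real.exp (-π * y * c^2) * (1 - Real.exp (-(π * y)))⁻¹ := by
        rw [tsum_mul_left, tsum_geometric_of_lt_one (Real.exp_nonneg _) hrlt]
    _ ≤ Real.exp (-π * y * c^2) * 2 := by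
        apply mul_le_mul_of_nonneg_left _ (Real.exp_nonneg _)
        have h12 : (1/2:ℝ) ≤ 1 - Real.exp (-(π * y)) := by linarith
        calc (1 - Real.exp (-(π * y)))⁻¹ ≤ (1/2:ℝ)⁻¹ := by
              apply inv_anti₀ (by norm_num) h12
          _ = 2 := by norm_num
    _ = 2 * Real.exp (-π * y * c^2) := mul_comm _ _

/-! ### Series expansions of the theta functions -/

lemma theta3_eq (y : ℝ) (hy : 1 ≤ y) :
    theta3 y = 1 + 2 * Real.exp (-(π * y)) + 2 * ∑' k : ℕ, Real.exp (-π * y * ((k : ℝ) + 2)^2) := by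
  have h0 := (master_bound y hy 0 le_rfl).1
  have h1 := (master_bound y hy 1 zero_le_one).1
  have hs1 : Summable (fun n : ℕ => Real.exp (-π * y * ((n : ℝ))^2)) :=
    h0.congr (fun k => by push_cast; ring_nf)
  have key := tsum_of_nat_of_neg_add_one (f := fun n : ℤ => Real.exp (-π * y * (n : ℝ)^2))
    (hs1.congr (fun k => by push_cast; ring_nf)) (h1.congr (fun k => by push_cast; ring_nf))
  rw [theta3, key]
  have e1 : (∑' n : ℕ, Real.exp (-π * y * (((n:ℕ) : ℤ) : ℝ)^2))
      = 1 + Real.exp (-(π * y)) + ∑' k : ℕ, Real.exp (-π * y * ((k : ℝ) + 2)^2) := by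
    have hs1' : Summable (fun n : ℕ => Real.exp (-π * y * (((n:ℕ) : ℤ) : ℝ)^2)) :=
      hs1.congr (fun k => by push_cast; ring_nf)
    rw [Summable.tsum_eq_zero_add hs1', Summable.tsum_eq_zero_add ((summable_nat_add_iff 1).2 hs1')]
    have t0 : Real.exp (-π * y * (((0:ℕ):ℤ):ℝ)^2) = 1 := by norm_num
    have t1 : Real.exp (-π * y * (((0+1:ℕ):ℤ):ℝ)^2) = Real.exp (-(π*y)) := by
      norm_num
    have t2 : (∑' k : ℕ, Real.exp (-π * y * (((k+1+1:ℕ):ℤ):ℝ)^2))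
        = ∑' k : ℕ, Real.exp (-π * y * ((k : ℝ) + 2)^2) := by
      apply tsum_congr; intro k; congr 1; push_cast; ring
    rw [t0, t1, t2]; ring
  have e2 : (∑' n : ℕ, Real.exp (-π * y * (((-((n:ℕ) + 1) : ℤ)) : ℝ)^2))
      = Real.exp (-(π * y)) + ∑' k : ℕ, Real.exp (-π * y * ((k : ℝ) + 2)^2) := by
    have hcg : (fun n : ℕ => Real.exp (-π * y * (((-((n:ℕ) + 1) : ℤ)) : ℝ)^2))
        = fun k : ℕ => Real.exp (-π * y * ((k : ℝ) + 1)^2) := by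
      funext k; congr 1; push_cast; ring
    rw [hcg, Summable.tsum_eq_zero_add h1]
    have t1 : Real.exp (-π * y * (((0:ℕ):ℝ) + 1)^2) = Real.exp (-(π*y)) := by norm_num
    have t2 : (∑' k : ℕ, Real.exp (-π * y * (((k+1:ℕ):ℝ) + 1)^2))
        = ∑' k : ℕ, Real.exp (-π * y * ((k : ℝ) + 2)^2) := by
      apply tsum_congr; intro k; congr 1; push_cast; ring
    rw [t1, t2]
  rw [e1, e2]; ring

lemma habs_zpow (j : ℤ) (x : ℝ) : |(-1:ℝ)^j * Real.exp x| = Real.exp x := by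
  rcases Int.even_or_odd j with h|h
  · rw [h.neg_one_zpow, one_mul, abs_of_pos (Real.exp_pos x)]
  · rw [h.neg_one_zpow, neg_one_mul, abs_neg, abs_of_pos (Real.exp_pos x)]

lemma habs_pow (k : ℕ) (x : ℝ) : |(-1:ℝ)^k * Real.exp x| = Real.exp x := by
  rw [← zpow_natCast (-1:ℝ) k, habs_zpow]

lemma theta4_eq (y : ℝ) (hy : 1 ≤ y) :
    theta4 y = 1 - 2 * Real.exp (-(π * y))
      + 2 * ∑' k : ℕ, (-1:ℝ)^(k:ℕ) * Real.exp (-π * y * ((k : ℝ) + 2)^2) := by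
  have h0 := (master_bound y hy 0 le_rfl).1
  have h1 := (master_bound y hy 1 zero_le_one).1
  have hsn : Summable (fun n : ℕ => (-1:ℝ)^(n:ℕ) * Real.exp (-π * y * ((n:ℝ))^2)) := by
    apply Summable.of_abs
    exact h0.congr (fun k => by rw [habs_pow]; congr 1; ring)
  have key := tsum_of_nat_of_neg_add_one
      (f := fun n : ℤ => (-1:ℝ)^n * Real.exp (-π * y * (n : ℝ)^2))
    (hsn.congr (fun k => by push_cast [zpow_natCast]; norm_num))
    (by
      apply Summable.of_abs
      exact h1.congr (fun k => by rw [habs_zpow]; congr 1; push_cast; ring))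
  rw [theta4, key]
  have e1 : (∑' n : ℕ, (-1:ℝ)^((n:ℕ):ℤ) * Real.exp (-π * y * (((n:ℕ):ℤ) : ℝ)^2))
      = 1 - Real.exp (-(π * y)) + ∑' k : ℕ, (-1:ℝ)^(k:ℕ) * Real.exp (-π * y * ((k : ℝ) + 2)^2) := by
    have hsn' : Summable (fun n : ℕ => (-1:ℝ)^((n:ℕ):ℤ) * Real.exp (-π * y * (((n:ℕ):ℤ):ℝ)^2)) :=
      hsn.congr (fun k => by push_cast [zpow_natCast]; norm_num)
    rw [Summable.tsum_eq_zero_add hsn', Summable.tsum_eq_zero_add ((summable_nat_add_iff 1).2 hsn')]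
    have t2 : (∑' k : ℕ, (-1:ℝ)^(((k+1+1:ℕ)):ℤ) * Real.exp (-π * y * (((k+1+1:ℕ):ℤ):ℝ)^2))
        = ∑' k : ℕ, (-1:ℝ)^(k:ℕ) * Real.exp (-π * y * ((k : ℝ) + 2)^2) := by
      apply tsum_congr; intro k
      rw [zpow_natCast]
      have : (-1:ℝ)^(k+1+1) = (-1)^k := by rw [pow_succ, pow_succ]; ring
      rw [this]
      congr 1; push_cast; ring
    rw [t2]
    norm_num
    ring
  have e2 : (∑' n : ℕ, (-1:ℝ)^(-((n:ℤ)+1)) * Real.exp (-π * y * (((-((n:ℤ)+1)):ℤ) : ℝ)^2))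
      = - Real.exp (-(π * y)) + ∑' k : ℕ, (-1:ℝ)^(k:ℕ) * Real.exp (-π * y * ((k : ℝ) + 2)^2) := by
    have hcg : (fun n : ℕ => (-1:ℝ)^(-((n:ℤ)+1)) * Real.exp (-π * y * (((-((n:ℤ)+1)):ℤ) : ℝ)^2))
        = fun k : ℕ => (-1:ℝ)^((k+1:ℕ)) * Real.exp (-π * y * ((k:ℝ) + 1)^2) := by
      funext k
      congr 1
      · rw [← zpow_natCast (-1:ℝ) (k+1)]
        rw [show (-((k:ℤ)+1)) = -(((k+1:ℕ)):ℤ) by push_cast; ring]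
        rw [zpow_neg]
        rcases Int.even_or_odd (((k+1:ℕ)):ℤ) with h|h
        · rw [h.neg_one_zpow]; norm_num
        · rw [h.neg_one_zpow]; norm_num
      · congr 1; push_cast; ring
    have hsn1 : Summable (fun k : ℕ => (-1:ℝ)^((k+1:ℕ)) * Real.exp (-π * y * ((k:ℝ) + 1)^2)) := by
      apply Summable.of_abs
      exact h1.congr (fun k => by rw [habs_pow])
    rw [hcg, Summable.tsum_eq_zero_add hsn1]
    have t2 : (∑' k : ℕ, (-1:ℝ)^((k+1+1:ℕ)) * Real.exp (-π * y * (((k+1:ℕ):ℝ) + 1)^2))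
        = ∑' k : ℕ, (-1:ℝ)^(k:ℕ) * Real.exp (-π * y * ((k : ℝ) + 2)^2) := by
      apply tsum_congr; intro k
      have : (-1:ℝ)^(k+1+1) = (-1)^k := by rw [pow_succ, pow_succ]; ring
      rw [this]
      congr 1; push_cast; ring
    rw [t2]
    norm_num
  rw [e1, e2]; ring

lemma theta2_eq (y : ℝ) (hy : 1 ≤ y) :
    theta2 y = 2 * Real.exp (-π * y * (1/2:ℝ)^2)
      + 2 * ∑' k : ℕ, Real.exp (-π * y * ((k : ℝ) + 3/2)^2) := by
  have hhalf := (master_bound y hy (1/2) (by norm_num)).1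
  have key := tsum_of_nat_of_neg_add_one
      (f := fun n : ℤ => Real.exp (-π * y * ((n : ℝ) + 1/2)^2))
    (hhalf.congr (fun k => by push_cast; ring_nf))
    (hhalf.congr (fun k => by push_cast; ring_nf))
  rw [theta2, key]
  have e1 : (∑' n : ℕ, Real.exp (-π * y * ((((n:ℕ):ℤ):ℝ) + 1/2)^2))
      = Real.exp (-π * y * (1/2:ℝ)^2) + ∑' k : ℕ, Real.exp (-π * y * ((k : ℝ) + 3/2)^2) := by
    have hs : Summable (fun n : ℕ => Real.exp (-π * y * ((((n:ℕ):ℤ):ℝ) + 1/2)^2)) :=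
      hhalf.congr (fun k => by push_cast; ring_nf)
    rw [Summable.tsum_eq_zero_add hs]
    have t1 : Real.exp (-π * y * ((((0:ℕ):ℤ):ℝ) + 1/2)^2) = Real.exp (-π * y * (1/2:ℝ)^2) := by
      norm_num
    have t2 : (∑' k : ℕ, Real.exp (-π * y * ((((k+1:ℕ):ℤ):ℝ) + 1/2)^2))
        = ∑' k : ℕ, Real.exp (-π * y * ((k : ℝ) + 3/2)^2) := by
      apply tsum_congr; intro k; congr 1; push_cast; ring
    rw [t1, t2]
  have e2 : (∑' n : ℕ, Real.exp (-π * y * (((((-((n:ℕ)+1):ℤ)):ℝ) + 1/2))^2))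
      = Real.exp (-π * y * (1/2:ℝ)^2) + ∑' k : ℕ, Real.exp (-π * y * ((k : ℝ) + 3/2)^2) := by
    have hcg : (fun n : ℕ => Real.exp (-π * y * (((((-((n:ℕ)+1):ℤ)):ℝ) + 1/2))^2))
        = fun n : ℕ => Real.exp (-π * y * ((((n:ℕ):ℤ):ℝ) + 1/2)^2) := by
      funext k; congr 1; push_cast; ring
    rw [hcg]
    have hs : Summable (fun n : ℕ => Real.exp (-π * y * ((((n:ℕ):ℤ):ℝ) + 1/2)^2)) :=
      hhalf.congr (fun k => by push_cast; ring_nf)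
    rw [Summable.tsum_eq_zero_add hs]
    have t1 : Real.exp (-π * y * ((((0:ℕ):ℤ):ℝ) + 1/2)^2) = Real.exp (-π * y * (1/2:ℝ)^2) := by
      norm_num
    have t2 : (∑' k : ℕ, Real.exp (-π * y * ((((k+1:ℕ):ℤ):ℝ) + 1/2)^2))
        = ∑' k : ℕ, Real.exp (-π * y * ((k : ℝ) + 3/2)^2) := by
      apply tsum_congr; intro k; congr 1; push_cast; ring
    rw [t1, t2]
  rw [e1, e2]; ring

/-! ### The `Exp2` asymptotic-expansion predicate and its algebra -/

/-- `f(y) = c0 + c1 q + c2 q² + O(q³)` where `q = e^{-π y}`. -/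
def Exp2 (f : ℝ → ℝ) (c0 c1 c2 : ℝ) : Prop :=
  (fun y => f y - (c0 + c1 * Real.exp (-(π * y)) + c2 * Real.exp (-(π * y))^2))
    =O[atTop] fun y => Real.exp (-(π * y))^3

lemma qpow_isBigO {k l : ℕ} (h : k ≤ l) :
    (fun y : ℝ => Real.exp (-(π * y))^l) =O[atTop] fun y => Real.exp (-(π * y))^k := by
  apply IsBigO.of_bound 1
  filter_upwards [eventually_ge_atTop (0:ℝ)] with y hy
  have h1 : Real.exp (-(π * y)) ≤ 1 :=
    Real.exp_le_one_iff.2 (neg_nonpos.2 (mul_nonneg pi_pos.le hy))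
  rw [Real.norm_eq_abs, Real.norm_eq_abs, abs_of_nonneg (by positivity),
    abs_of_nonneg (by positivity), one_mul]
  exact pow_le_pow_of_le_one (Real.exp_nonneg _) h1 h

lemma qpow_isBigO_one (k : ℕ) :
    (fun y : ℝ => Real.exp (-(π * y))^k) =O[atTop] fun _ : ℝ => (1:ℝ) :=
  (qpow_isBigO (Nat.zero_le k)).congr_right (fun y => by rw [pow_zero])

lemma poly_isBigO_one (c0 c1 c2 : ℝ) :
    (fun y => c0 + c1 * Real.exp (-(π * y)) + c2 * Real.exp (-(π * y))^2)
      =O[atTop] fun _ : ℝ => (1:ℝ) := by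
  have h0 : (fun _ : ℝ => c0) =O[atTop] fun _ : ℝ => (1:ℝ) :=
    isBigO_const_const _ one_ne_zero _
  have h1 := (qpow_isBigO_one 1).const_mul_left c1
  have h2 := (qpow_isBigO_one 2).const_mul_left c2
  exact ((h0.add h1).add h2).congr_left (fun y => by ring)

lemma Exp2.isBigO_one {f : ℝ → ℝ} {c0 c1 c2 : ℝ} (hf : Exp2 f c0 c1 c2) :
    f =O[atTop] fun _ : ℝ => (1:ℝ) := by
  have h1 := hf.trans (qpow_isBigO_one 3)
  exact (h1.add (poly_isBigO_one c0 c1 c2)).congr_left (fun y => by ring)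

lemma Exp2.add {f g : ℝ → ℝ} {a0 a1 a2 b0 b1 b2 : ℝ}
    (hf : Exp2 f a0 a1 a2) (hg : Exp2 g b0 b1 b2) :
    Exp2 (fun y => f y + g y) (a0+b0) (a1+b1) (a2+b2) :=
  (IsBigO.add hf hg).congr_left (fun y => by ring)

lemma Exp2.cmul {f : ℝ → ℝ} {a0 a1 a2 : ℝ} (c : ℝ) (hf : Exp2 f a0 a1 a2) :
    Exp2 (fun y => c * f y) (c*a0) (c*a1) (c*a2) :=
  (IsBigO.const_mul_left hf c).congr_left (fun y => by ring)

lemma Exp2.const (c : ℝ) : Exp2 (fun _ => c) c 0 0 :=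
  (isBigO_zero _ _).congr_left (fun y => by ring)

lemma Exp2.mul {f g : ℝ → ℝ} {a0 a1 a2 b0 b1 b2 : ℝ}
    (hf : Exp2 f a0 a1 a2) (hg : Exp2 g b0 b1 b2) :
    Exp2 (fun y => f y * g y) (a0*b0) (a0*b1 + a1*b0) (a0*b2 + a1*b1 + a2*b0) := by
  have hgO := hg.isBigO_one
  have T1 := ((poly_isBigO_one a0 a1 a2).mul hg).congr_right (fun y => one_mul _)
  have T2 := (IsBigO.mul hf hgO).congr_right (fun y => mul_one _)
  have T3 : (fun y : ℝ => (a1*b2 + a2*b1) * Real.exp (-(π * y))^3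
        + (a2*b2) * Real.exp (-(π * y))^4)
      =O[atTop] fun y => Real.exp (-(π * y))^3 :=
    ((isBigO_refl _ _).const_mul_left _).add
      ((qpow_isBigO (by norm_num : 3 ≤ 4)).const_mul_left _)
  exact ((T1.add T2).add T3).congr_left (fun y => by ring)

lemma Exp2.coeff_congr {f : ℝ → ℝ} {c0 c1 c2 d0 d1 d2 : ℝ} (hf : Exp2 f c0 c1 c2)
    (h0 : c0 = d0) (h1 : c1 = d1) (h2 : c2 = d2) : Exp2 f d0 d1 d2 := by
  subst h0; subst h1; subst h2; exact hf

lemma Exp2.fun_congr {f g : ℝ → ℝ} {c0 c1 c2 : ℝ} (hf : Exp2 f c0 c1 c2)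
    (h : ∀ y, f y = g y) : Exp2 g c0 c1 c2 :=
  IsBigO.congr_left hf (fun y => by rw [h y])

/-! ### The theta functions are `Exp2` -/

lemma exp3_cast (y : ℝ) : Real.exp (-(π * y))^3 = Real.exp (-π * y * (3:ℝ)) := by
  rw [← Real.exp_nat_mul]; congr 1; push_cast; ring

lemma exp2_theta3 : Exp2 theta3 1 2 0 := by
  apply IsBigO.of_bound 4
  filter_upwards [eventually_ge_atTop (1:ℝ)] with y hy
  have hπy : (0:ℝ) < π * y := mul_pos pi_pos (lt_of_lt_of_le one_pos hy)
  rw [theta3_eq y hy]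
  have hT := (master_bound y hy 2 (by norm_num)).2
  have hT0 : (0:ℝ) ≤ ∑' k : ℕ, Real.exp (-π * y * ((k : ℝ) + 2)^2) :=
    tsum_nonneg (fun k => Real.exp_nonneg _)
  have h43 : Real.exp (-π * y * (2:ℝ)^2) ≤ Real.exp (-π * y * (3:ℝ)) :=
    Real.exp_le_exp.2 (by nlinarith)
  rw [Real.norm_eq_abs, Real.norm_eq_abs, exp3_cast]
  rw [show (1 + 2 * Real.exp (-(π * y)) + 2 * ∑' k : ℕ, Real.exp (-π * y * ((k : ℝ) + 2)^2))
      - (1 + 2 * Real.exp (-(π * y)) + 0 * Real.exp (-(π * y))^2)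
      = 2 * ∑' k : ℕ, Real.exp (-π * y * ((k : ℝ) + 2)^2) from by ring]
  rw [abs_of_nonneg (by linarith), abs_of_nonneg (Real.exp_nonneg _)]
  linarith

lemma exp2_theta4 : Exp2 theta4 1 (-2) 0 := by
  apply IsBigO.of_bound 4
  filter_upwards [eventually_ge_atTop (1:ℝ)] with y hy
  have hπy : (0:ℝ) < π * y := mul_pos pi_pos (lt_of_lt_of_le one_pos hy)
  rw [theta4_eq y hy]
  have hm := master_bound y hy 2 (by norm_num)
  have habs' : ∀ k : ℕ, ‖(-1:ℝ)^(k:ℕ) * Real.exp (-π * y * ((k : ℝ) + 2)^2)‖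
      = Real.exp (-π * y * ((k : ℝ) + 2)^2) := fun k => by
    rw [Real.norm_eq_abs, habs_pow]
  have hTabs : |∑' k : ℕ, (-1:ℝ)^(k:ℕ) * Real.exp (-π * y * ((k : ℝ) + 2)^2)|
      ≤ 2 * Real.exp (-π * y * (2:ℝ)^2) := by
    have hns : Summable (fun k : ℕ => ‖(-1:ℝ)^(k:ℕ) * Real.exp (-π * y * ((k : ℝ) + 2)^2)‖) :=
      hm.1.congr (fun k => (habs' k).symm)
    have := norm_tsum_le_tsum_norm hns
    rw [Real.norm_eq_abs] at this
    calc |∑' k : ℕ, (-1:ℝ)^(k:ℕ) * Real.exp (-π * y * ((k : ℝ) + 2)^2)|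
        ≤ ∑' k : ℕ, ‖(-1:ℝ)^(k:ℕ) * Real.exp (-π * y * ((k : ℝ) + 2)^2)‖ := this
      _ = ∑' k : ℕ, Real.exp (-π * y * ((k : ℝ) + 2)^2) := tsum_congr habs'
      _ ≤ 2 * Real.exp (-π * y * (2:ℝ)^2) := hm.2
  have h43 : Real.exp (-π * y * (2:ℝ)^2) ≤ Real.exp (-π * y * (3:ℝ)) :=
    Real.exp_le_exp.2 (by nlinarith)
  rw [Real.norm_eq_abs, Real.norm_eq_abs, exp3_cast]
  rw [show (1 - 2 * Real.exp (-(π * y))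
        + 2 * ∑' k : ℕ, (-1:ℝ)^(k:ℕ) * Real.exp (-π * y * ((k : ℝ) + 2)^2))
      - (1 + (-2) * Real.exp (-(π * y)) + 0 * Real.exp (-(π * y))^2)
      = 2 * ∑' k : ℕ, (-1:ℝ)^(k:ℕ) * Real.exp (-π * y * ((k : ℝ) + 2)^2) from by ring]
  rw [abs_of_nonneg (Real.exp_nonneg _), abs_mul]
  have : |(2:ℝ)| = 2 := by norm_num
  rw [this]
  linarith

lemma abs_pow4_sub_pow4 {t a M r : ℝ} (hM : 0 ≤ M) (ht : |t| ≤ M) (ha : |a| ≤ M)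
    (htar : |t - a| ≤ r) : |t^4 - a^4| ≤ r * (4 * M^3) := by
  have key : t^4 - a^4 = (t - a) * (t^3 + t^2*a + t*a^2 + a^3) := by ring
  have e1 : |t^3| ≤ M^3 := by rw [abs_pow]; exact pow_le_pow_left₀ (abs_nonneg t) ht 3
  have e2 : |t^2*a| ≤ M^3 := by
    rw [abs_mul, abs_pow, show M^3 = M^2*M from by ring]
    exact mul_le_mul (pow_le_pow_left₀ (abs_nonneg t) ht 2) ha (abs_nonneg a) (pow_nonneg hM 2)
  have e3 : |t*a^2| ≤ M^3 := by
    rw [abs_mul, abs_pow, show M^3 = M*M^2 from by ring]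
    exact mul_le_mul ht (pow_le_pow_left₀ (abs_nonneg a) ha 2) (pow_nonneg (abs_nonneg a) 2) hM
  have e4 : |a^3| ≤ M^3 := by rw [abs_pow]; exact pow_le_pow_left₀ (abs_nonneg a) ha 3
  have A := abs_add_le (t^3 + t^2*a + t*a^2) (a^3)
  have B := abs_add_le (t^3 + t^2*a) (t*a^2)
  have C := abs_add_le (t^3) (t^2*a)
  have h0r : (0:ℝ) ≤ r := le_trans (abs_nonneg _) htar
  rw [key, abs_mul]
  have hfac : |t^3 + t^2*a + t*a^2 + a^3| ≤ 4 * M^3 := by linarith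
  exact mul_le_mul htar hfac (abs_nonneg _) h0r

lemma exp2_theta2_pow4 : Exp2 (fun y => theta2 y ^ 4) 0 16 0 := by
  apply IsBigO.of_bound 3456
  filter_upwards [eventually_ge_atTop (1:ℝ)] with y hy
  have hπy : (0:ℝ) < π * y := mul_pos pi_pos (lt_of_lt_of_le one_pos hy)
  set A := Real.exp (-π * y * (1/2:ℝ)^2) with hA
  set B := Real.exp (-π * y * (3/2:ℝ)^2) with hB
  have hA0 : (0:ℝ) < A := Real.exp_pos _
  have hB0 : (0:ℝ) < B := Real.exp_pos _
  have hBA : B ≤ A := Real.exp_le_exp.2 (by nlinarith)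
  have hm := master_bound y hy (3/2) (by norm_num)
  have hT0 : (0:ℝ) ≤ ∑' k : ℕ, Real.exp (-π * y * ((k : ℝ) + 3/2)^2) :=
    tsum_nonneg (fun k => Real.exp_nonneg _)
  have ht2 := theta2_eq y hy
  have hdist : |theta2 y - 2*A| ≤ 4*B := by
    rw [ht2, show 2*A + 2*(∑' k : ℕ, Real.exp (-π * y * ((k : ℝ) + 3/2)^2)) - 2*A
      = 2*(∑' k : ℕ, Real.exp (-π * y * ((k : ℝ) + 3/2)^2)) from by ring]
    rw [abs_of_nonneg (by linarith)]
    linarith [hm.2]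
  have hbound : |theta2 y| ≤ 6*A := by
    rw [ht2, abs_of_nonneg (by linarith)]
    have := hm.2
    linarith
  have h2A : |2*A| ≤ 6*A := by rw [abs_of_nonneg (by linarith)]; linarith
  have hq := abs_pow4_sub_pow4 (t := theta2 y) (a := 2*A) (M := 6*A) (r := 4*B)
    (by linarith) hbound h2A hdist
  have hA4 : (2*A)^4 = 16 * Real.exp (-(π * y)) := by
    rw [hA, mul_pow, ← Real.exp_nat_mul,
      show ((4:ℕ):ℝ) * (-π * y * (1/2:ℝ)^2) = -(π*y) from by push_cast; ring]
    norm_num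
  have hBA3 : (4*B) * (4 * (6*A)^3) = 3456 * (B * A^3) := by ring
  have hq3 : B * A^3 = Real.exp (-(π * y))^3 := by
    rw [hA, hB, ← Real.exp_nat_mul, ← Real.exp_add, ← Real.exp_nat_mul]
    congr 1; push_cast; ring
  rw [Real.norm_eq_abs, Real.norm_eq_abs]
  rw [show theta2 y ^ 4 - (0 + 16 * Real.exp (-(π * y)) + 0 * Real.exp (-(π * y))^2)
    = theta2 y ^ 4 - 16 * Real.exp (-(π * y)) from by ring, ← hA4]
  rw [abs_of_nonneg (by positivity : (0:ℝ) ≤ Real.exp (-(π * y))^3)]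
  calc |theta2 y ^ 4 - (2*A)^4| ≤ (4*B) * (4 * (6*A)^3) := hq
    _ = 3456 * (B * A^3) := hBA3
    _ = 3456 * Real.exp (-(π * y))^3 := by rw [hq3]

lemma exp2_delta8 : Exp2 Delta8 0 1 (-8) := by
  have h42 := exp2_theta4.mul exp2_theta4
  have h44 := h42.mul h42
  have h2 := Exp2.cmul (1/16 : ℝ) exp2_theta2_pow4
  have h := h2.mul h44
  refine (h.coeff_congr (by norm_num) (by norm_num) (by norm_num)).fun_congr (fun y => ?_)
  unfold Delta8
  ring

lemma exp2_theta3_pow (m : ℕ) :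
    Exp2 (fun y => theta3 y ^ m) 1 (2*(m:ℝ)) (2*(m:ℝ)*((m:ℝ)-1)) := by
  induction m with
  | zero =>
      refine ((Exp2.const 1).coeff_congr rfl (by norm_num) (by norm_num)).fun_congr
        (fun y => by rw [pow_zero])
  | succ m ih =>
      have h := ih.mul exp2_theta3
      refine (h.coeff_congr (by norm_num) (by push_cast; ring) (by push_cast; ring)).fun_congr
        (fun y => by rw [← pow_succ])

/-! ### Coefficient uniqueness -/

lemma kill_const {c : ℝ} {g h : ℝ → ℝ} (H : (fun y => c + g y) =O[atTop] h)
    (hg : Tendsto g atTop (𝓝 0)) (hh : Tendsto h atTop (𝓝 0)) : c = 0 := by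
  have t1 : Tendsto (fun y => c + g y) atTop (𝓝 (c + 0)) := tendsto_const_nhds.add hg
  have t2 := H.trans_tendsto hh
  have := tendsto_nhds_unique t1 t2
  simpa using this

lemma tendsto_q : Tendsto (fun y : ℝ => Real.exp (-(π * y))) atTop (𝓝 0) := by
  have h1 : Tendsto (fun y : ℝ => π * y) atTop atTop :=
    Tendsto.const_mul_atTop pi_pos tendsto_id
  exact Real.tendsto_exp_neg_atTop_nhds_zero.comp h1

lemma tendsto_qpow (k : ℕ) : Tendsto (fun y : ℝ => Real.exp (-(π * y))^k) atTop (𝓝 (0^k)) :=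
  tendsto_q.pow k

lemma q_mul_exp (y : ℝ) : Real.exp (-(π * y)) * Real.exp (π * y) = 1 := by
  rw [← Real.exp_add]; norm_num

lemma coeffs_zero {c0 c1 c2 : ℝ}
    (h : (fun y => c0 + c1 * Real.exp (-(π * y)) + c2 * Real.exp (-(π * y))^2)
      =O[atTop] fun y => Real.exp (-(π * y))^3) : c0 = 0 ∧ c1 = 0 ∧ c2 = 0 := by
  have hq := tendsto_q
  have hq3 : Tendsto (fun y : ℝ => Real.exp (-(π * y))^3) atTop (𝓝 0) := by
    simpa using tendsto_qpow 3
  have hq2 : Tendsto (fun y : ℝ => Real.exp (-(π * y))^2) atTop (𝓝 0) := by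
    simpa using tendsto_qpow 2
  have hc0 : c0 = 0 := by
    apply kill_const (g := fun y => c1 * Real.exp (-(π * y)) + c2 * Real.exp (-(π * y))^2)
      (h.congr_left (fun y => by ring)) _ hq3
    have := (hq.const_mul c1).add (hq2.const_mul c2)
    simpa using this
  have h2 : (fun y => c1 + c2 * Real.exp (-(π * y))) =O[atTop]
      fun y => Real.exp (-(π * y))^2 := by
    have hmul := h.mul (isBigO_refl (fun y : ℝ => Real.exp (π * y)) atTop)
    refine hmul.congr (fun y => ?_) (fun y => ?_)
    · rw [hc0]
      calc (0 + c1 * Real.exp (-(π * y)) + c2 * Real.exp (-(π * y))^2) * Real.exp (π * y)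
          = c1 * (Real.exp (-(π * y)) * Real.exp (π * y))
            + c2 * Real.exp (-(π * y)) * (Real.exp (-(π * y)) * Real.exp (π * y)) := by ring
        _ = c1 + c2 * Real.exp (-(π * y)) := by rw [q_mul_exp]; ring
    · calc Real.exp (-(π * y))^3 * Real.exp (π * y)
          = Real.exp (-(π * y))^2 * (Real.exp (-(π * y)) * Real.exp (π * y)) := by ring
        _ = Real.exp (-(π * y))^2 := by rw [q_mul_exp]; ring
  have hc1 : c1 = 0 := by
    apply kill_const (g := fun y => c2 * Real.exp (-(π * y)))
      (h2.congr_left (fun y => rfl)) _ hq2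
    simpa using hq.const_mul c2
  have h3 : (fun _ : ℝ => c2) =O[atTop] fun y => Real.exp (-(π * y)) := by
    have hmul := h2.mul (isBigO_refl (fun y : ℝ => Real.exp (π * y)) atTop)
    refine hmul.congr (fun y => ?_) (fun y => ?_)
    · rw [hc1]
      calc (0 + c2 * Real.exp (-(π * y))) * Real.exp (π * y)
          = c2 * (Real.exp (-(π * y)) * Real.exp (π * y)) := by ring
        _ = c2 := by rw [q_mul_exp]; ring
    · calc Real.exp (-(π * y))^2 * Real.exp (π * y)
          = Real.exp (-(π * y)) * (Real.exp (-(π * y)) * Real.exp (π * y)) := by ring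
        _ = Real.exp (-(π * y)) := by rw [q_mul_exp]; ring
  have hc2 : c2 = 0 := by
    apply kill_const (g := fun _ : ℝ => (0:ℝ)) (h3.congr_left (fun y => by ring))
      tendsto_const_nhds hq
  exact ⟨hc0, hc1, hc2⟩

lemma exp2_unique {f : ℝ → ℝ} {c0 c1 c2 d0 d1 d2 : ℝ}
    (h1 : Exp2 f c0 c1 c2) (h2 : Exp2 f d0 d1 d2) : c0 = d0 ∧ c1 = d1 ∧ c2 = d2 := by
  have hsub := IsBigO.sub h2 h1
  have h := coeffs_zero (c0 := c0 - d0) (c1 := c1 - d1) (c2 := c2 - d2)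
    (hsub.congr_left (fun y => by ring))
  refine ⟨by linarith [h.1], by linarith [h.2.1], by linarith [h.2.2]⟩

/-! ### The main theorem -/

/-- Determination of a₁ and a₂ from the kissing number: if n ≥ 17 and
f(y) = θ₃(y)^n + a₁ θ₃(y)^{n−8} Δ₈(y) + a₂ θ₃(y)^{n−16} Δ₈(y)² satisfies
f(y) − 1 − K e^{−2πy} = O(e^{−3πy}) as y → ∞, then a₁ = −2n and
a₂ = 2n(n − 23) + K. -/
theorem coefficients_a1_a2_eq (n : ℕ) (hn : 17 ≤ n) (K a1 a2 : ℝ)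
    (h : (fun y : ℝ => theta3 y ^ n + a1 * theta3 y ^ (n - 8) * Delta8 y
        + a2 * theta3 y ^ (n - 16) * Delta8 y ^ 2 - 1 - K * Real.exp (-2 * π * y))
      =O[atTop] fun y : ℝ => Real.exp (-3 * π * y)) :
    a1 = -2 * (n : ℝ) ∧ a2 = 2 * (n : ℝ) * ((n : ℝ) - 23) + K := by
  have c8 : ((n - 8 : ℕ) : ℝ) = (n : ℝ) - 8 := by
    rw [Nat.cast_sub (by omega)]; norm_num
  have c16 : ((n - 16 : ℕ) : ℝ) = (n : ℝ) - 16 := by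
    rw [Nat.cast_sub (by omega)]; norm_num
  -- build the Exp2 expansion of the function
  have hA := (exp2_theta3_pow (n - 8)).mul exp2_delta8
  have hA' := hA.cmul a1
  have hD2 := exp2_delta8.mul exp2_delta8
  have hB := (exp2_theta3_pow (n - 16)).mul hD2
  have hB' := hB.cmul a2
  have hF0 := ((exp2_theta3_pow n).add hA').add hB'
  have hF : Exp2 (fun y : ℝ => theta3 y ^ n + a1 * theta3 y ^ (n - 8) * Delta8 y
        + a2 * theta3 y ^ (n - 16) * Delta8 y ^ 2)
      1 (2*(n:ℝ) + a1) (2*(n:ℝ)*((n:ℝ)-1) + a1*(2*(n:ℝ) - 24) + a2) := by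
    refine (hF0.coeff_congr (by norm_num) (by rw [c8, c16]; ring)
      (by rw [c8, c16]; ring)).fun_congr (fun y => by ring)
  -- the hypothesis gives another Exp2 expansion
  have hG : Exp2 (fun y : ℝ => theta3 y ^ n + a1 * theta3 y ^ (n - 8) * Delta8 y
        + a2 * theta3 y ^ (n - 16) * Delta8 y ^ 2) 1 0 K := by
    unfold Exp2
    have e2 : ∀ y : ℝ, Real.exp (-2 * π * y) = Real.exp (-(π * y))^2 := fun y => by
      rw [← Real.exp_nat_mul]; congr 1; push_cast; ring
    have e3 : ∀ y : ℝ, Real.exp (-3 * π * y) = Real.exp (-(π * y))^3 := fun y => by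
      rw [← Real.exp_nat_mul]; congr 1; push_cast; ring
    refine h.congr (fun y => ?_) (fun y => (e3 y))
    rw [e2 y]; ring
  obtain ⟨-, E1, E2⟩ := exp2_unique hF hG
  constructor
  · linarith
  · nlinarith [E1, E2]
end
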